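/- (Flooding completes in nD rounds on D-connected networks.) Let (E_t)_{t∈ℕ} be a D-connected time-varying graph on a finite vertex set V with |V| = n, and define flooding knowledge sets K_v(t) as usual. Then for every vertex v, K_v((n−1)·D) = V; hence after (n−1)·D rounds every node knows the initial values of all nodes and can therefore compute any function f of the n initial values. -/
import Mathlib


/-- Flooding knowledge sets on a time-varying graph `E : ℕ → SimpleGraph V`:
`K v 0 = {v}` and `K v (t+1) = K v t ∪ ⋃_{w ∈ N_t(v)} K w t`. -/
def tvFloodKnow {V : Type*} (E : ℕ → SimpleGraph V) : ℕ → V → Set V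
  | 0, v => {v}
  | (t+1), v => tvFloodKnow E t v ∪ ⋃ w ∈ (E t).neighborSet v, tvFloodKnow E t w

/-- A time-varying graph is `D`-connected if, for every `t`, the union of the edge sets
appearing in the window `[t, t+D)` forms a connected graph. -/
def DConnected {V : Type*} (E : ℕ → SimpleGraph V) (D : ℕ) : Prop :=
  ∀ t : ℕ, (⨆ s ∈ Set.Ico t (t + D), E s).Connected

lemma tvFloodKnow_mono {V : Type*} (E : ℕ → SimpleGraph V) {s t : ℕ} (h : s ≤ t) (v : V) :
    tvFloodKnow E s v ⊆ tvFloodKnow E t v := by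
  induction t with
  | zero => simp_all
  | succ t ih =>
    rcases Nat.lt_or_ge s (t+1) with h' | h'
    · exact (ih (by omega)).trans (Set.subset_union_left)
    · have : s = t + 1 := by omega
      subst this; rfl

lemma tvFloodKnow_step {V : Type*} (E : ℕ → SimpleGraph V) {s : ℕ} {a b : V}
    (h : (E s).Adj a b) : tvFloodKnow E s a ⊆ tvFloodKnow E (s+1) b := by
  intro x hx
  exact Set.mem_union_right _ (Set.mem_biUnion (h.symm) hx)

lemma tvFloodKnow_self {V : Type*} (E : ℕ → SimpleGraph V) (t : ℕ) (u : V) :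
    u ∈ tvFloodKnow E t u :=
  tvFloodKnow_mono E (Nat.zero_le t) u (by simp [tvFloodKnow])

lemma tvFloodKnow_grow {V : Type*} (E : ℕ → SimpleGraph V) {D : ℕ}
    (hconn : DConnected E D) (u : V) (t : ℕ)
    (h : {w | u ∈ tvFloodKnow E t w} ≠ Set.univ) :
    ∃ b, b ∉ {w | u ∈ tvFloodKnow E t w} ∧ u ∈ tvFloodKnow E (t + D) b := by
  obtain ⟨b0, hb0⟩ : ∃ b, b ∉ {w | u ∈ tvFloodKnow E t w} := by
    by_contra h'; push_neg at h'; exact h (Set.eq_univ_of_forall h')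
  obtain ⟨p⟩ := ((hconn t).preconnected u b0)
  obtain ⟨d, _, hd1, hd2⟩ :=
    p.exists_boundary_dart {w | u ∈ tvFloodKnow E t w} (tvFloodKnow_self E t u) hb0
  obtain ⟨s, hs, hadj⟩ : ∃ s ∈ Set.Ico t (t + D), (E s).Adj d.fst d.snd := by
    have := d.adj
    simpa using this
  refine ⟨d.snd, hd2, ?_⟩
  have h1 : u ∈ tvFloodKnow E s d.fst := tvFloodKnow_mono E hs.1 _ hd1
  have h2 : u ∈ tvFloodKnow E (s+1) d.snd := tvFloodKnow_step E hadj h1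
  have hs2 := hs.2
  exact tvFloodKnow_mono E (by omega : s + 1 ≤ t + D) _ h2

/-- Flooding completes in `(n-1)·D` rounds on a `D`-connected time-varying network with
`n` nodes: after `(n-1)·D` rounds every node's knowledge set is all of `V`, so every node
knows all initial values and can therefore compute any function of them. -/
theorem tvFloodKnow_complete {V : Type*} [Fintype V] (E : ℕ → SimpleGraph V)
    (D : ℕ) (hD : 1 ≤ D) (hconn : DConnected E D) (v : V) :
    tvFloodKnow E ((Fintype.card V - 1) * D) v = Set.univ := by
  set n := Fintype.card V with hn
  have hn1 : 1 ≤ n := Fintype.card_pos_iff.mpr ⟨v⟩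
  have key : ∀ u : V, ∀ k : ℕ, min n (k + 1) ≤ {w | u ∈ tvFloodKnow E (k * D) w}.ncard := by
    intro u k
    induction k with
    | zero =>
      have hne : ({w | u ∈ tvFloodKnow E (0 * D) w}).Nonempty :=
        ⟨u, tvFloodKnow_self E _ u⟩
      have := (Set.ncard_pos (Set.toFinite _)).mpr hne
      omega
    | succ k ih =>
      by_cases hu : {w | u ∈ tvFloodKnow E (k * D) w} = Set.univ
      · have hsub : Set.univ ⊆ {w | u ∈ tvFloodKnow E ((k+1) * D) w} := by
          rw [← hu]
          intro x hx
          exact tvFloodKnow_mono E (by nlinarith : k * D ≤ (k+1) * D) x hx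
        have : {w | u ∈ tvFloodKnow E ((k+1) * D) w} = Set.univ :=
          Set.eq_univ_of_univ_subset hsub
        rw [this, Set.ncard_univ, Nat.card_eq_fintype_card]
        omega
      · obtain ⟨b, hb1, hb2⟩ := tvFloodKnow_grow E hconn u (k * D) hu
        have hsub : insert b {w | u ∈ tvFloodKnow E (k * D) w}
            ⊆ {w | u ∈ tvFloodKnow E ((k+1) * D) w} := by
          intro x hx
          rcases hx with rfl | hx
          · have : (k+1) * D = k * D + D := by ring
            rw [this]; exact hb2
          · exact tvFloodKnow_mono E (by nlinarith : k * D ≤ (k+1) * D) x hx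
        have hle := Set.ncard_le_ncard hsub (Set.toFinite _)
        rw [Set.ncard_insert_of_notMem hb1 (Set.toFinite _)] at hle
        have hcard : {w | u ∈ tvFloodKnow E ((k+1) * D) w}.ncard ≤ n := by
          have := Set.ncard_le_ncard (Set.subset_univ
            {w | u ∈ tvFloodKnow E ((k+1) * D) w}) (Set.toFinite _)
          rwa [Set.ncard_univ, Nat.card_eq_fintype_card] at this
        omega
  apply Set.eq_univ_of_forall
  intro u
  have hk := key u (n - 1)
  have hmin : min n (n - 1 + 1) = n := by omega
  rw [hmin] at hk
  have huniv : {w | u ∈ tvFloodKnow E ((n - 1) * D) w} = Set.univ := by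
    apply Set.eq_of_subset_of_ncard_le (Set.subset_univ _)
    rwa [Set.ncard_univ, Nat.card_eq_fintype_card]
  have : v ∈ {w | u ∈ tvFloodKnow E ((n - 1) * D) w} := huniv ▸ Set.mem_univ v
  exact this
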